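/- Let M be an n×n complex matrix (n ≥ 1), b a block assignment, M_D the pinching of M with respect to b, and M_off = M − M_D. Assume M_D is invertible and ρ = ρ(A) < 1 where A = M_D⁻¹ M_off; set c = −n·ln(1 − ρ). For m ≥ 1 define L_m = Σ_{p=1}^m ((−1)^{p−1}/p)·trace(A^p) and Δ_m = det(M_D)·exp(L_m). Then |det(M) − Δ_m| / |Δ_m| ≤ c ρ^m · exp(c ρ^m). If in addition c ρ^m < 1, then |det(M) − Δ_m| / |Δ_m| ≤ (7/4) c ρ^m. -/

import Mathlib

/-!
Write `M = M_D (1 + A)`. Over `ℂ` the characteristic polynomial of `aeval A q` has roots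
`q(μ)`, `μ` running over the eigenvalues of `A` with multiplicity; hence `det (1 + A) = ∏ (1 + μ)`
and `tr (A ^ p) = ∑ μ ^ p`, so that `L_m = ∑_μ T_m(μ)` with `T_m` the degree-`m` Taylor polynomial
of `log (1 + z)`. Therefore `det M = Δ_m · exp R` with `R = ∑_μ (log (1 + μ) - T_m(μ))`, a sum of
`n` Taylor tails, each at most `∑_{p > m} ρ ^ p / p ≤ ρ ^ m · (-log (1 - ρ))`. So `‖R‖ ≤ c ρ ^ m`,
and the relative error `‖exp R - 1‖ ≤ exp (c ρ ^ m) - 1` is at most `c ρ ^ m · exp (c ρ ^ m)`,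
and by convexity of `exp` at most `(e - 1) c ρ ^ m ≤ 7/4 · c ρ ^ m` when `c ρ ^ m ≤ 1`.
-/

open Matrix

/-- The pinching (block diagonal part) of a matrix `M` with respect to a
block assignment `b`. -/
def pinch {n k : ℕ} (b : Fin n → Fin k) (M : Matrix (Fin n) (Fin n) ℂ) :
    Matrix (Fin n) (Fin n) ℂ :=
  fun i j => if b i = b j then M i j else 0

namespace Matrix

open Polynomial

variable {K ι : Type*} [Field K] [IsAlgClosed K] [Fintype ι] [DecidableEq ι]

theorem card_roots_charpoly (A : Matrix ι ι K) :
    Multiset.card A.charpoly.roots = Fintype.card ι := by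
  rw [splits_iff_card_roots.mp (IsAlgClosed.splits _), charpoly_natDegree_eq_dim]

theorem det_sub_algebraMap (A : Matrix ι ι K) (r : K) :
    (A - algebraMap K (Matrix ι ι K) r).det = (A.charpoly.roots.map (· - r)).prod := by
  have h := (IsAlgClosed.splits A.charpoly).eval_eq_prod_roots_of_monic A.charpoly_monic r
  rw [eval_charpoly] at h
  rw [← neg_sub, det_neg, show algebraMap K _ r = scalar ι r from rfl, h,
    ← card_roots_charpoly A, ← Multiset.card_map (r - ·), ← Multiset.prod_map_neg,
    Multiset.map_map]
  simp

theorem det_aeval (A : Matrix ι ι K) (q : K[X]) :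
    (aeval A q).det = (A.charpoly.roots.map q.eval).prod := by
  -- `det ∘ aeval A` is multiplicative on the commutative ring `K[X]`, so it can be applied to
  -- the factorisation of `q` even though the matrix factors live in a noncommutative ring.
  let detAeval : K[X] →* K := detMonoidHom.comp (aeval A : K[X] →ₐ[K] Matrix ι ι K).toMonoidHom
  have hdet : ∀ p, (aeval A p).det = detAeval p := fun _ => rfl
  conv_lhs => rw [hdet, (IsAlgClosed.splits q).eq_prod_roots]
  rw [map_mul, map_multiset_prod, Multiset.map_map]
  simp only [Function.comp_def, ← hdet, aeval_C, map_sub, aeval_X, det_sub_algebraMap]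
  rw [Algebra.algebraMap_eq_smul_one, det_smul, det_one, mul_one, Multiset.prod_map_prod_map,
    ← card_roots_charpoly A, ← Multiset.prod_replicate, ← Multiset.map_const',
    ← Multiset.prod_map_mul]
  congr 1
  refine Multiset.map_congr rfl fun μ _ => ?_
  rw [(IsAlgClosed.splits q).eval_eq_prod_roots]

theorem charpoly_aeval (A : Matrix ι ι K) (q : K[X]) :
    (aeval A q).charpoly = ((A.charpoly.roots.map q.eval).map (X - C ·)).prod := by
  refine Polynomial.funext fun y => ?_
  rw [eval_charpoly, show scalar ι y = aeval A (C y) from (aeval_C A y).symm, ← map_sub,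
    det_aeval, eval_multiset_prod, Multiset.map_map]
  simp

theorem roots_charpoly_aeval (A : Matrix ι ι K) (q : K[X]) :
    (aeval A q).charpoly.roots = A.charpoly.roots.map q.eval := by
  rw [charpoly_aeval, roots_multiset_prod_X_sub_C]

theorem trace_pow_eq_sum_roots_charpoly_pow (A : Matrix ι ι K) (p : ℕ) :
    (A ^ p).trace = (A.charpoly.roots.map (· ^ p)).sum := by
  have h := roots_charpoly_aeval A (X ^ p)
  rw [map_pow, aeval_X] at h
  simp [trace_eq_sum_roots_charpoly, h]

theorem det_one_add_eq_prod_roots_charpoly (A : Matrix ι ι K) :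
    (1 + A).det = (A.charpoly.roots.map (1 + ·)).prod := by
  have h := det_aeval A (1 + X)
  rw [map_add, map_one, aeval_X] at h
  simpa using h

end Matrix

namespace Complex

theorem logTaylor_succ_eq_sum_Icc (m : ℕ) (z : ℂ) :
    logTaylor (m + 1) z = ∑ p ∈ Finset.Icc 1 m, (-1) ^ (p - 1) / p * z ^ p := by
  rw [logTaylor, Finset.range_eq_Ico, Finset.sum_eq_sum_Ico_succ_bot (by positivity : 0 < m + 1),
    zero_add, Finset.Ico_add_one_right_eq_Icc, Nat.cast_zero, div_zero, zero_add]
  refine Finset.sum_congr rfl fun p hp => ?_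
  obtain ⟨k, rfl⟩ := Nat.exists_eq_add_of_le' (Finset.mem_Icc.mp hp).1
  rw [Nat.add_sub_cancel, pow_add _ k 2]
  ring

theorem norm_log_one_add_sub_logTaylor_le {ρ : ℝ} (hρ : ρ < 1) {z : ℂ} (hz : ‖z‖ ≤ ρ) (m : ℕ) :
    ‖log (1 + z) - logTaylor (m + 1) z‖ ≤ ρ ^ m * -Real.log (1 - ρ) := by
  have hρ0 : 0 ≤ ρ := (norm_nonneg z).trans hz
  have htail := (hasSum_nat_add_iff' (m + 1)).mpr (hasSum_taylorSeries_log (hz.trans_lt hρ))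
  have hgeom :=
    (Real.hasSum_pow_div_log_of_abs_lt_one (abs_lt.mpr ⟨by linarith, hρ⟩)).mul_left (ρ ^ m)
  refine htail.norm_le_of_bounded hgeom fun q => ?_
  rw [norm_div, norm_mul, norm_pow, norm_neg, norm_one, one_pow, one_mul, norm_pow, norm_natCast,
    show q + (m + 1) = m + (q + 1) by ring]
  calc ‖z‖ ^ (m + (q + 1)) / ((m + (q + 1) : ℕ) : ℝ) ≤ ρ ^ (m + (q + 1)) / (q + 1) := by
        gcongr
        push_cast; linarith
    _ = ρ ^ m * (ρ ^ (q + 1) / (q + 1)) := by rw [pow_add, mul_div_assoc]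

end Complex

theorem Real.exp_sub_one_le_mul_exp (x : ℝ) : Real.exp x - 1 ≤ x * Real.exp x := by
  have h := Real.add_one_le_exp (-x)
  have hmul := Real.exp_neg x ▸ mul_le_mul_of_nonneg_right h (Real.exp_pos x).le
  rw [inv_mul_cancel₀ (Real.exp_pos x).ne'] at hmul
  linarith

theorem Real.exp_sub_one_le_seven_fourths_mul {x : ℝ} (h0 : 0 ≤ x) (h1 : x ≤ 1) :
    Real.exp x - 1 ≤ 7 / 4 * x := by
  have hconv := convexOn_exp.2 (Set.mem_univ 0) (Set.mem_univ 1) (sub_nonneg.mpr h1) h0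
    (sub_add_cancel 1 x)
  simp only [smul_eq_mul, mul_zero, mul_one, zero_add, Real.exp_zero] at hconv
  nlinarith [Real.exp_one_lt_d9]

theorem Complex.norm_exp_sub_one_le_of_norm_le {z : ℂ} {x : ℝ} (h : ‖z‖ ≤ x) :
    ‖exp z - 1‖ ≤ Real.exp x - 1 := by
  have hz := norm_exp_sub_sum_le_exp_norm_sub_sum z 1
  simp only [Finset.range_one, Finset.sum_singleton, pow_zero, Nat.factorial_zero, Nat.cast_one,
    div_one] at hz
  linarith [Real.exp_le_exp.mpr h]

namespace Matrix

variable {ι : Type*} [Fintype ι] [DecidableEq ι]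

noncomputable def traceLogTaylor (A : Matrix ι ι ℂ) (m : ℕ) : ℂ :=
  ∑ p ∈ Finset.Icc 1 m, ((-1 : ℂ) ^ (p - 1) / p) * (A ^ p).trace

theorem traceLogTaylor_eq_sum_logTaylor (A : Matrix ι ι ℂ) (m : ℕ) :
    A.traceLogTaylor m = (A.charpoly.roots.map (Complex.logTaylor (m + 1))).sum := by
  simp only [traceLogTaylor, trace_pow_eq_sum_roots_charpoly_pow, ← Multiset.sum_map_mul_left,
    Complex.logTaylor_succ_eq_sum_Icc]
  exact Multiset.sum_map_sum_map _ _

theorem exists_det_one_add_eq_exp_traceLogTaylor_mul_exp {A : Matrix ι ι ℂ} {ρ : ℝ}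
    (hA : ∀ μ ∈ A.charpoly.roots, ‖μ‖ ≤ ρ) (hρ : ρ < 1) (m : ℕ) :
    ∃ R : ℂ, ‖R‖ ≤ Fintype.card ι * (ρ ^ m * -Real.log (1 - ρ)) ∧
      (1 + A).det = Complex.exp (A.traceLogTaylor m) * Complex.exp R := by
  set s := A.charpoly.roots
  refine ⟨(s.map fun μ => Complex.log (1 + μ) - Complex.logTaylor (m + 1) μ).sum, ?_, ?_⟩
  · calc _ ≤ (s.map fun μ => ‖Complex.log (1 + μ) - Complex.logTaylor (m + 1) μ‖).sum := by
          simpa [Multiset.map_map] using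
            norm_multiset_sum_le (s.map fun μ => Complex.log (1 + μ) - Complex.logTaylor (m + 1) μ)
      _ ≤ (s.map fun _ => ρ ^ m * -Real.log (1 - ρ)).sum :=
          Multiset.sum_map_le_sum_map _ _ fun μ hμ =>
            Complex.norm_log_one_add_sub_logTaylor_le hρ (hA μ hμ) m
      _ = _ := by
          rw [Multiset.map_const', Multiset.sum_replicate, card_roots_charpoly, nsmul_eq_mul]
  · rw [← Complex.exp_add, traceLogTaylor_eq_sum_logTaylor, ← Multiset.sum_map_add,
      det_one_add_eq_prod_roots_charpoly, Complex.exp_multiset_sum, Multiset.map_map]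
    refine congrArg _ (Multiset.map_congr rfl fun μ hμ => ?_)
    have hμ1 : 1 + μ ≠ 0 := by
      intro h
      have := hA μ hμ
      rw [eq_neg_of_add_eq_zero_right h, norm_neg, norm_one] at this
      linarith
    simp [Complex.exp_log hμ1]

end Matrix

theorem stmt7_general {n : ℕ}
    (M : Matrix (Fin n) (Fin n) ℂ)
    (MD Moff A : Matrix (Fin n) (Fin n) ℂ)
    (hMoff : Moff = M - MD) (hA : A = MD⁻¹ * Moff)
    (hMDinv : IsUnit MD.det)
    (ρ : ℝ)
    (hρub : ∀ μ ∈ A.charpoly.roots, ‖μ‖ ≤ ρ)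
    (hρ1 : ρ < 1)
    (c : ℝ) (hc : c = -(n : ℝ) * Real.log (1 - ρ))
    (L : ℕ → ℂ)
    (hL : ∀ m, L m = ∑ p ∈ Finset.Icc 1 m, ((-1 : ℂ) ^ (p - 1) / p) * (A ^ p).trace)
    (Δ : ℕ → ℂ) (hΔ : ∀ m, Δ m = MD.det * Complex.exp (L m)) :
    ∀ m : ℕ, 1 ≤ m →
      ‖M.det - Δ m‖ / ‖Δ m‖ ≤
        c * ρ ^ m * Real.exp (c * ρ ^ m) ∧
      (c * ρ ^ m < 1 →
        ‖M.det - Δ m‖ / ‖Δ m‖ ≤ 7 / 4 * (c * ρ ^ m)) := by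
  intro m _
  obtain ⟨R, hR, hdet⟩ := A.exists_det_one_add_eq_exp_traceLogTaylor_mul_exp hρub hρ1 m
  have hM : M = MD * (1 + A) := by
    rw [mul_add, mul_one, hA, ← mul_assoc, mul_nonsing_inv MD hMDinv, one_mul, hMoff,
      add_sub_cancel]
  have hΔm : Δ m = MD.det * Complex.exp (A.traceLogTaylor m) := by rw [hΔ, hL]; rfl
  have hΔ0 : Δ m ≠ 0 := hΔm ▸ mul_ne_zero hMDinv.ne_zero (Complex.exp_ne_zero _)
  have hratio : ‖M.det - Δ m‖ / ‖Δ m‖ = ‖Complex.exp R - 1‖ := by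
    rw [hM, det_mul, hdet, ← mul_assoc, ← hΔm, ← mul_sub_one, norm_mul,
      mul_div_cancel_left₀ _ (norm_ne_zero_iff.mpr hΔ0)]
  have hRc : ‖R‖ ≤ c * ρ ^ m :=
    calc ‖R‖ ≤ n * (ρ ^ m * -Real.log (1 - ρ)) := by simpa using hR
      _ = c * ρ ^ m := by rw [hc]; ring
  have hexp := Complex.norm_exp_sub_one_le_of_norm_le hRc
  rw [hratio]
  exact ⟨hexp.trans (Real.exp_sub_one_le_mul_exp _),
    fun h => hexp.trans (Real.exp_sub_one_le_seven_fourths_mul ((norm_nonneg R).trans hRc) h.le)⟩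

/-- **Theorem (sequence of determinant approximations).**
Let `M_D` be the pinching of `M`, `A = M_D⁻¹ M_off` with `ρ = ρ(A) < 1`, and
`c = -n ln(1-ρ)`. With `L_m = Σ_{p=1}^m ((-1)^{p-1}/p) trace(A^p)` and
`Δ_m = det(M_D) exp(L_m)`, for every `m ≥ 1` one has
`|det M - Δ_m| / |Δ_m| ≤ c ρ^m e^{c ρ^m}`, and if moreover `c ρ^m < 1` then
`|det M - Δ_m| / |Δ_m| ≤ (7/4) c ρ^m`. -/
theorem stmt7 {n k : ℕ} (hn : 1 ≤ n)
    (M : Matrix (Fin n) (Fin n) ℂ) (b : Fin n → Fin k)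
    (MD Moff A : Matrix (Fin n) (Fin n) ℂ)
    (hMD : MD = pinch b M) (hMoff : Moff = M - MD) (hA : A = MD⁻¹ * Moff)
    (hMDinv : IsUnit MD.det)
    (ρ : ℝ)
    (hρub : ∀ μ ∈ A.charpoly.roots, ‖μ‖ ≤ ρ)
    (hρmax : ∃ μ ∈ A.charpoly.roots, ‖μ‖ = ρ)
    (hρ1 : ρ < 1)
    (c : ℝ) (hc : c = -(n : ℝ) * Real.log (1 - ρ))
    (L : ℕ → ℂ)
    (hL : ∀ m, L m = ∑ p ∈ Finset.Icc 1 m, ((-1 : ℂ) ^ (p - 1) / p) * (A ^ p).trace)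
    (Δ : ℕ → ℂ) (hΔ : ∀ m, Δ m = MD.det * Complex.exp (L m)) :
    ∀ m : ℕ, 1 ≤ m →
      ‖M.det - Δ m‖ / ‖Δ m‖ ≤
        c * ρ ^ m * Real.exp (c * ρ ^ m) ∧
      (c * ρ ^ m < 1 →
        ‖M.det - Δ m‖ / ‖Δ m‖ ≤ 7 / 4 * (c * ρ ^ m)) :=
  stmt7_general M MD Moff A hMoff hA hMDinv ρ hρub hρ1 c hc L hL Δ hΔ
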